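/- arXiv:2311.04084 — 5 statements merged into one kernel-verified Lean document; each statement's English description precedes it below -/
import Mathlib

section
/- Any continuously differentiable solution f₀ on [α, 1] of the delay differential equation (λ₀ - λ₁)·φ·f₀'(φ) + λ₀·(f₀((λ₁/λ₀)·φ) - f₀(φ)) = 0 on (α, 1), with boundary condition f₀(1) = 1 and f₀(φ) = 0 for φ > 1, is strictly decreasing on [α, 1]. -/
/-- Any continuously differentiable solution `f₀` on `[α,1]` of
`(λ₀-λ₁)φ f₀'(φ) + λ₀(f₀((λ₁/λ₀)φ) - f₀(φ)) = 0` on `(α,1)` with `f₀(1) = 1` and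
`f₀(φ) = 0` for `φ > 1` is strictly decreasing on `[α,1]`. -/
theorem stmt2 (l0 l1 α : ℝ) (h0 : 0 < l0) (h01 : l0 < l1) (hα : 0 < α) (hα1 : α < 1)
    (f f' : ℝ → ℝ)
    (hcont : ContinuousOn f (Set.Icc α 1))
    (hderiv : ∀ φ ∈ Set.Ioo α 1, HasDerivAt f (f' φ) φ)
    (hf'cont : ContinuousOn f' (Set.Ioo α 1))
    (hode : ∀ φ ∈ Set.Ioo α 1,
      (l0 - l1) * φ * f' φ + l0 * (f (l1 / l0 * φ) - f φ) = 0)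
    (hbd : f 1 = 1) (hext : ∀ φ : ℝ, 1 < φ → f φ = 0) :
    StrictAntiOn f (Set.Icc α 1) := by
  have hl1 : 0 < l1 := h0.trans h01
  have hr1 : 1 < l1 / l0 := (one_lt_div h0).2 h01
  -- positivity of f near 1
  have hc1 : ContinuousWithinAt f (Set.Icc α 1) 1 := hcont 1 ⟨hα1.le, le_refl 1⟩
  have hev : {x | 0 < f x} ∈ nhdsWithin 1 (Set.Icc α 1) := by
    apply hc1
    rw [hbd]
    exact Ioi_mem_nhds one_pos
  obtain ⟨ε, hε, hball⟩ := Metric.mem_nhdsWithin_iff.1 hev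
  set b := max (1 - ε / 2) (l0 / l1) with hbdef
  have hbl1 : b < 1 := max_lt (by linarith) ((div_lt_one hl1).2 h01)
  -- f' < 0 above b
  have hneg : ∀ φ ∈ Set.Ioo α 1, b < φ → f' φ < 0 := by
    intro φ hφ hbφ
    have hφ0 : 0 < φ := hα.trans hφ.1
    have h1 : f (l1 / l0 * φ) = 0 := by
      apply hext
      have h2 : l0 / l1 < φ := lt_of_le_of_lt (le_max_right _ _) hbφ
      rw [div_lt_iff₀ hl1] at h2
      rw [div_mul_eq_mul_div, lt_div_iff₀ h0]
      nlinarith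
    have hfpos : 0 < f φ := by
      apply hball
      refine ⟨?_, ⟨hφ.1.le, hφ.2.le⟩⟩
      rw [Metric.mem_ball, Real.dist_eq, abs_lt]
      have h3 : 1 - ε / 2 < φ := lt_of_le_of_lt (le_max_left _ _) hbφ
      constructor <;> [linarith; linarith [hφ.2]]
    have heq := hode φ hφ
    rw [h1] at heq
    by_contra hge
    push_neg at hge
    have h2 : (l0 - l1) * φ < 0 := mul_neg_of_neg_of_pos (by linarith) hφ0
    nlinarith [mul_nonpos_of_nonpos_of_nonneg h2.le hge, mul_pos h0 hfpos]
  -- f' < 0 everywhere on (α,1)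
  have hS : ∀ φ ∈ Set.Ioo α 1, f' φ < 0 := by
    by_contra hcon
    push_neg at hcon
    obtain ⟨φ₀, hφ₀, hf'₀⟩ := hcon
    set S := {φ : ℝ | φ ∈ Set.Ioo α 1 ∧ 0 ≤ f' φ} with hSdef
    have hφ₀S : φ₀ ∈ S := ⟨hφ₀, hf'₀⟩
    have hSne : S.Nonempty := ⟨φ₀, hφ₀S⟩
    have hSb : ∀ x ∈ S, x ≤ b := by
      intro x hx
      by_contra hxb
      push_neg at hxb
      exact absurd hx.2 (not_le.2 (hneg x hx.1 hxb))
    have hbdd : BddAbove S := ⟨b, hSb⟩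
    set c := sSup S with hc
    have hcb : c ≤ b := csSup_le hSne hSb
    have hcα : α < c := lt_of_lt_of_le hφ₀.1 (le_csSup hbdd hφ₀S)
    have hc1lt : c < 1 := lt_of_le_of_lt hcb hbl1
    have hcIoo : c ∈ Set.Ioo α 1 := ⟨hcα, hc1lt⟩
    have hcpos : 0 < c := hα.trans hcα
    -- f' c ≥ 0 by continuity
    have hf'c : 0 ≤ f' c := by
      have hclos : c ∈ closure S := csSup_mem_closure hSne hbdd
      have hcont' : ContinuousAt f' c :=
        (hf'cont c hcIoo).continuousAt (isOpen_Ioo.mem_nhds hcIoo)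
      obtain ⟨u, hu, hulim⟩ := mem_closure_iff_seq_limit.1 hclos
      exact ge_of_tendsto (hcont'.tendsto.comp hulim)
        (Filter.Eventually.of_forall fun n => (hu n).2)
    -- f strictly decreasing on [c,1]
    have hanti : StrictAntiOn f (Set.Icc c 1) := by
      apply strictAntiOn_of_deriv_neg (convex_Icc c 1)
        (hcont.mono (Set.Icc_subset_Icc hcα.le le_rfl))
      intro x hx
      rw [interior_Icc] at hx
      have hxIoo : x ∈ Set.Ioo α 1 := ⟨hcα.trans hx.1, hx.2⟩
      rw [(hderiv x hxIoo).deriv]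
      by_contra hge
      push_neg at hge
      exact absurd (le_csSup hbdd ⟨hxIoo, hge⟩) (not_le.2 hx.1)
    -- ODE at c gives f c ≤ f (l1/l0 * c)
    have heq := hode c hcIoo
    have hneg2 : (l0 - l1) * c < 0 := mul_neg_of_neg_of_pos (by linarith) hcpos
    have hle : f c ≤ f (l1 / l0 * c) := by
      by_contra hlt
      push_neg at hlt
      nlinarith [mul_nonpos_of_nonpos_of_nonneg hneg2.le hf'c,
        mul_pos h0 (sub_pos.2 hlt)]
    have hclt : c < l1 / l0 * c := lt_mul_of_one_lt_left hcpos hr1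
    rcases le_or_gt (l1 / l0 * c) 1 with hrc | hrc
    · have := hanti ⟨le_rfl, hc1lt.le⟩ ⟨hclt.le, hrc⟩ hclt
      linarith
    · have h0' : f (l1 / l0 * c) = 0 := hext _ hrc
      have h1' := hanti ⟨le_rfl, hc1lt.le⟩ ⟨hc1lt.le, le_rfl⟩ hc1lt
      rw [hbd] at h1'
      linarith
  -- conclude
  apply strictAntiOn_of_deriv_neg (convex_Icc α 1) hcont
  intro x hx
  rw [interior_Icc] at hx
  rw [(hderiv x hx).deriv]
  exact hS x hx
end

section
/- Any continuously differentiable solution f₁ on [α, 1] of the delay differential equation (λ₀ - λ₁)·φ·f₁'(φ) + λ₀·(f₁((λ₁/λ₀)·φ) - f₁(φ)) + (φ - 1) = 0 on (α, 1), with boundary condition f₁(1) = 0 and f₁(φ) = -b for φ > 1, is strictly decreasing on [α, 1]. -/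
/-- Any continuously differentiable solution `f₁` on `[α,1]` of
`(λ₀-λ₁)φ f₁'(φ) + λ₀(f₁((λ₁/λ₀)φ) - f₁(φ)) + (φ-1) = 0` on `(α,1)` with `f₁(1) = 0`
and `f₁(φ) = -b` for `φ > 1` is strictly decreasing on `[α,1]`. -/
theorem stmt3 (l0 l1 α b : ℝ) (h0 : 0 < l0) (h01 : l0 < l1) (hα : 0 < α) (hα1 : α < 1)
    (hb : 0 < b) (f f' : ℝ → ℝ)
    (hcont : ContinuousOn f (Set.Icc α 1))
    (hderiv : ∀ φ ∈ Set.Ioo α 1, HasDerivAt f (f' φ) φ)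
    (hf'cont : ContinuousOn f' (Set.Ioo α 1))
    (hode : ∀ φ ∈ Set.Ioo α 1,
      (l0 - l1) * φ * f' φ + l0 * (f (l1 / l0 * φ) - f φ) + (φ - 1) = 0)
    (hbd : f 1 = 0) (hext : ∀ φ : ℝ, 1 < φ → f φ = -b) :
    StrictAntiOn f (Set.Icc α 1) := by
  have hl1 : 0 < l1 := lt_trans h0 h01
  have hψ : 1 < l1 / l0 := (one_lt_div h0).mpr h01
  -- continuity of f at 1 within the interval
  have hf1 : ContinuousWithinAt f (Set.Icc α 1) 1 :=
    hcont 1 ⟨le_of_lt hα1, le_refl 1⟩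
  obtain ⟨δ, hδ, hδ'⟩ := Metric.continuousWithinAt_iff.mp hf1 b hb
  set c : ℝ := max (max α (l0 / l1)) (1 - δ) with hc
  have hc1 : c < 1 :=
    max_lt (max_lt hα1 ((div_lt_one hl1).mpr h01)) (by linarith)
  have hcα : α ≤ c := le_max_of_le_left (le_max_left _ _)
  -- near 1 the derivative is negative
  have hnear : ∀ φ ∈ Set.Ioo c 1, f' φ < 0 := by
    intro φ hφ
    have hφα : α < φ := lt_of_le_of_lt hcα hφ.1
    have hφIoo : φ ∈ Set.Ioo α 1 := ⟨hφα, hφ.2⟩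
    have hφpos : 0 < φ := lt_trans hα hφα
    have hφc2 : l0 / l1 < φ := lt_of_le_of_lt (le_max_of_le_left (le_max_right _ _)) hφ.1
    have h1lt : 1 < l1 / l0 * φ := by
      rw [show (1:ℝ) = l1 / l0 * (l0 / l1) by field_simp]
      exact mul_lt_mul_of_pos_left hφc2 (by positivity)
    have hfval : f (l1 / l0 * φ) = -b := hext _ h1lt
    have hdist : dist φ 1 < δ := by
      rw [Real.dist_eq]
      rw [abs_sub_lt_iff]
      constructor
      · linarith [hφ.2]
      · have : 1 - δ < φ := lt_of_le_of_lt (le_max_right _ _) hφ.1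
        linarith
    have hfb : dist (f φ) (f 1) < b := hδ' ⟨le_of_lt hφα, le_of_lt hφ.2⟩ hdist
    rw [hbd, Real.dist_eq, sub_zero, abs_lt] at hfb
    have heq := hode φ hφIoo
    rw [hfval] at heq
    by_contra h
    push_neg at h
    nlinarith [mul_nonneg (mul_nonneg (by linarith : (0:ℝ) ≤ l1 - l0) hφpos.le) h,
      hφ.2, hfb.1]
  -- main claim: f' < 0 on (α,1)
  have hneg : ∀ φ ∈ Set.Ioo α 1, f' φ < 0 := by
    by_contra h
    push_neg at h
    obtain ⟨a, haIoo, haf⟩ := h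
    set A : Set ℝ := {x | x ∈ Set.Ioo α 1 ∧ 0 ≤ f' x} with hA
    have haA : a ∈ A := ⟨haIoo, haf⟩
    have hAne : A.Nonempty := ⟨a, haA⟩
    have hA_ub : ∀ x ∈ A, x ≤ c := by
      intro x hx
      by_contra hxc
      push_neg at hxc
      exact absurd hx.2 (not_le.mpr (hnear x ⟨hxc, hx.1.2⟩))
    have hbdd : BddAbove A := ⟨c, hA_ub⟩
    set x0 : ℝ := sSup A with hx0
    have hx0c : x0 ≤ c := csSup_le hAne hA_ub
    have hx0α : α < x0 := lt_of_lt_of_le haIoo.1 (le_csSup hbdd haA)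
    have hx01 : x0 < 1 := lt_of_le_of_lt hx0c hc1
    have hx0Ioo : x0 ∈ Set.Ioo α 1 := ⟨hx0α, hx01⟩
    have hx0pos : 0 < x0 := lt_trans hα hx0α
    -- f' x0 ≥ 0 by continuity
    have h0le : 0 ≤ f' x0 := by
      by_contra hlt
      push_neg at hlt
      have hca : ContinuousAt f' x0 :=
        hf'cont.continuousAt (Ioo_mem_nhds hx0α hx01)
      have hpre : f' ⁻¹' Set.Iio 0 ∈ nhds x0 := hca (Iio_mem_nhds hlt)
      obtain ⟨ε, hε, hball⟩ := Metric.mem_nhds_iff.mp hpre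
      obtain ⟨a', ha'A, ha'⟩ := exists_lt_of_lt_csSup hAne (by linarith : x0 - ε < x0)
      have ha'le : a' ≤ x0 := le_csSup hbdd ha'A
      have : a' ∈ Metric.ball x0 ε := by
        rw [Metric.mem_ball, Real.dist_eq, abs_sub_lt_iff]
        constructor <;> linarith
      exact absurd ha'A.2 (not_le.mpr (hball this))
    -- f' < 0 strictly to the right of x0
    have hright : ∀ x ∈ Set.Ioo x0 1, f' x < 0 := by
      intro x hx
      by_contra hge
      push_neg at hge
      have : x ∈ A := ⟨⟨lt_trans hx0α hx.1, hx.2⟩, hge⟩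
      exact absurd (le_csSup hbdd this) (not_le.mpr hx.1)
    -- f strictly decreasing on [x0, 1]
    have hanti : StrictAntiOn f (Set.Icc x0 1) := by
      apply strictAntiOn_of_deriv_neg (convex_Icc x0 1)
      · exact hcont.mono (Set.Icc_subset_Icc (le_of_lt hx0α) (le_refl 1))
      · intro x hx
        rw [interior_Icc] at hx
        rw [(hderiv x ⟨lt_trans hx0α hx.1, hx.2⟩).deriv]
        exact hright x hx
    -- key: f (ψ x0) < f x0
    have hx0ψ : x0 < l1 / l0 * x0 := by nlinarith
    have hkey : f (l1 / l0 * x0) < f x0 := by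
      rcases le_or_gt (l1 / l0 * x0) 1 with hle | hgt
      · exact hanti ⟨le_refl x0, le_of_lt hx01⟩ ⟨le_of_lt hx0ψ, hle⟩ hx0ψ
      · have h1 : f x0 > f 1 := hanti ⟨le_refl x0, le_of_lt hx01⟩ ⟨le_of_lt hx01, le_refl 1⟩ hx01
        rw [hbd] at h1
        rw [hext _ hgt]
        linarith
    -- contradiction with the ODE at x0
    have heq := hode x0 hx0Ioo
    nlinarith [mul_nonneg (mul_nonneg (by linarith : (0:ℝ) ≤ l1 - l0) hx0pos.le) h0le,
      mul_pos h0 (sub_pos.mpr hkey)]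
  -- conclude
  apply strictAntiOn_of_deriv_neg (convex_Icc α 1) hcont
  intro x hx
  rw [interior_Icc] at hx
  rw [(hderiv x hx).deriv]
  exact hneg x hx
end

section
/- Let L be as above (piecewise strictly decreasing with upward jumps, L(0)=1) and 0 < α < β with α < φ₀ < β. Define τ(φ) = inf{t ≥ 0 : L(t) ∉ (α/φ, β/φ)}. Then lim_{φ↓φ₀} τ(φ) = inf{t ≥ 0 : L(t) ∉ [α/φ₀, β/φ₀)}, provided all these times are finite. -/
/-- `L(t) = c^{N(t)} e^{-μ t}` for a counting path `N`. -/
noncomputable def Lc (c μ : ℝ) (N : ℝ → ℕ) (t : ℝ) : ℝ := c ^ (N t) * Real.exp (-μ * t)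

lemma Lc_pos {c : ℝ} (μ : ℝ) (hc : 0 < c) (N : ℝ → ℕ) (t : ℝ) : 0 < Lc c μ N t :=
  mul_pos (pow_pos hc _) (Real.exp_pos _)

/-- On any compact interval `[0,T]` on which `L < B`, the path `L` is uniformly bounded
away from `B`. -/
lemma sup_bound (c μ : ℝ) (hc : 1 < c) (hμ : 0 < μ) (N : ℝ → ℕ) (hmono : Monotone N)
    (hN0 : N 0 = 0)
    (hrc : ∀ s : ℝ, ∃ ε > 0, ∀ t ∈ Set.Ico s (s + ε), N t = N s)
    (T B : ℝ) (hT : 0 ≤ T) (hB : ∀ s ∈ Set.Icc 0 T, Lc c μ N s < B) :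
    ∃ M, 0 < M ∧ M < B ∧ ∀ s ∈ Set.Icc 0 T, Lc c μ N s ≤ M := by
  have hc0 : (0:ℝ) < c := lt_trans one_pos hc
  classical
  set tk : ℕ → ℝ := fun k => if k = 0 then 0 else sInf {s : ℝ | k ≤ N s} with htk_def
  have key : ∀ k, k ≤ N T → (tk k ∈ Set.Icc 0 T ∧ k ≤ N (tk k)) := by
    intro k hk
    rcases Nat.eq_zero_or_pos k with h0 | hpos
    · subst h0
      constructor
      · simp [htk_def, hT]
      · simp
    · have hkne : k ≠ 0 := hpos.ne'
      have htkk : tk k = sInf {s : ℝ | k ≤ N s} := by simp [htk_def, hkne]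
      set A : Set ℝ := {s : ℝ | k ≤ N s} with hA
      have hTA : T ∈ A := hk
      have hA0 : ∀ s ∈ A, (0:ℝ) ≤ s := by
        intro s hs
        by_contra h
        push_neg at h
        have h1 : N s ≤ N 0 := hmono h.le
        rw [hN0] at h1
        have : k ≤ N s := hs
        omega
      have hbdd : BddBelow A := ⟨0, hA0⟩
      have h0le : (0:ℝ) ≤ sInf A := le_csInf ⟨T, hTA⟩ hA0
      have hleT : sInf A ≤ T := csInf_le hbdd hTA
      have hNk : k ≤ N (sInf A) := by
        by_contra h
        push_neg at h
        obtain ⟨ε, hε, hεN⟩ := hrc (sInf A)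
        have hlb : ∀ s ∈ A, sInf A + ε ≤ s := by
          intro s hs
          by_contra h2
          push_neg at h2
          have h3 : sInf A ≤ s := csInf_le hbdd hs
          have h4 : N s = N (sInf A) := hεN s ⟨h3, h2⟩
          have : k ≤ N s := hs
          omega
        have := le_csInf ⟨T, hTA⟩ hlb
        linarith
      rw [htkk]
      exact ⟨⟨h0le, hleT⟩, hNk⟩
  set K := N T with hK
  have hne : (Finset.range (K + 1)).Nonempty := ⟨0, by simp⟩
  set M := (Finset.range (K + 1)).sup' hne (fun k => c ^ k * Real.exp (-μ * tk k)) with hM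
  have hterm_pos : ∀ k, 0 < c ^ k * Real.exp (-μ * tk k) := fun k =>
    mul_pos (pow_pos hc0 _) (Real.exp_pos _)
  have hMpos : 0 < M := lt_of_lt_of_le (hterm_pos 0)
    (Finset.le_sup' (fun k => c ^ k * Real.exp (-μ * tk k))
      (by simp : 0 ∈ Finset.range (K + 1)))
  have hMB : M < B := by
    rw [hM, Finset.sup'_lt_iff]
    intro k hk
    have hkK : k ≤ K := by
      simp only [Finset.mem_range] at hk; omega
    obtain ⟨hmem, hNk⟩ := key k hkK
    have h1 : c ^ k ≤ c ^ (N (tk k)) := pow_le_pow_right₀ hc.le hNk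
    have h2 : c ^ k * Real.exp (-μ * tk k) ≤ Lc c μ N (tk k) :=
      mul_le_mul_of_nonneg_right h1 (Real.exp_pos _).le
    exact lt_of_le_of_lt h2 (hB _ hmem)
  refine ⟨M, hMpos, hMB, ?_⟩
  intro s hs
  set k := N s with hk
  have hkK : k ≤ K := hmono hs.2
  have htks : tk k ≤ s := by
    rcases Nat.eq_zero_or_pos k with h0 | hpos
    · rw [h0]; simpa [htk_def] using hs.1
    · have hkne : k ≠ 0 := hpos.ne'
      have hA0 : ∀ x ∈ {x : ℝ | k ≤ N x}, (0:ℝ) ≤ x := by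
        intro x hx
        by_contra h
        push_neg at h
        have h1 : N x ≤ N 0 := hmono h.le
        rw [hN0] at h1
        have : k ≤ N x := hx
        omega
      have : sInf {x : ℝ | k ≤ N x} ≤ s := csInf_le ⟨0, hA0⟩ (le_refl k)
      simpa [htk_def, hkne] using this
  have h1 : Real.exp (-μ * s) ≤ Real.exp (-μ * tk k) := by
    apply Real.exp_le_exp.mpr
    nlinarith
  have h2 : Lc c μ N s ≤ c ^ k * Real.exp (-μ * tk k) :=
    mul_le_mul_of_nonneg_left h1 (pow_pos hc0 _).le
  exact le_trans h2 (Finset.le_sup' (fun k => c ^ k * Real.exp (-μ * tk k))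
    (by simp only [Finset.mem_range]; omega : k ∈ Finset.range (K + 1)))

/-- Right-continuity of exit times in the prior: with
`τ(φ) = inf{t ≥ 0 : L(t) ∉ (α/φ, β/φ)}` one has
`lim_{φ↓φ₀} τ(φ) = inf{t ≥ 0 : L(t) ∉ [α/φ₀, β/φ₀)}`, provided these times are finite. -/
theorem stmt9 (c μ α β φ₀ : ℝ) (hc : 1 < c) (hμ : 0 < μ)
    (hα : 0 < α) (hαβ : α < β) (hφ₀ : α < φ₀) (hφ₀β : φ₀ < β)
    (N : ℝ → ℕ) (hmono : Monotone N) (hN0 : N 0 = 0)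
    (hrc : ∀ s : ℝ, ∃ ε > 0, ∀ t ∈ Set.Ico s (s + ε), N t = N s)
    (hfin : ∀ φ : ℝ, φ₀ < φ →
      {t : ℝ | 0 ≤ t ∧ (Lc c μ N t ≤ α / φ ∨ β / φ ≤ Lc c μ N t)}.Nonempty)
    (hfin0 : {t : ℝ | 0 ≤ t ∧ (Lc c μ N t < α / φ₀ ∨ β / φ₀ ≤ Lc c μ N t)}.Nonempty) :
    Filter.Tendsto
      (fun φ : ℝ => sInf {t : ℝ | 0 ≤ t ∧ (Lc c μ N t ≤ α / φ ∨ β / φ ≤ Lc c μ N t)})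
      (nhdsWithin φ₀ (Set.Ioi φ₀))
      (nhds (sInf {t : ℝ | 0 ≤ t ∧ (Lc c μ N t < α / φ₀ ∨ β / φ₀ ≤ Lc c μ N t)})) := by
  have hc0 : (0:ℝ) < c := lt_trans one_pos hc
  have hφ₀pos : (0:ℝ) < φ₀ := lt_trans hα hφ₀
  have hβpos : (0:ℝ) < β := lt_trans hφ₀pos hφ₀β
  set S : ℝ → Set ℝ :=
    fun φ => {t : ℝ | 0 ≤ t ∧ (Lc c μ N t ≤ α / φ ∨ β / φ ≤ Lc c μ N t)} with hS
  set S0 : Set ℝ := {t : ℝ | 0 ≤ t ∧ (Lc c μ N t < α / φ₀ ∨ β / φ₀ ≤ Lc c μ N t)} with hS0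
  have hbddS : ∀ φ, BddBelow (S φ) := fun φ => ⟨0, fun t ht => ht.1⟩
  have hbdd0 : BddBelow S0 := ⟨0, fun t ht => ht.1⟩
  set τ0 : ℝ := sInf S0 with hτ0def
  clear_value τ0
  have hτ0 : 0 ≤ τ0 := hτ0def ▸ le_csInf hfin0 (fun t ht => ht.1)
  rw [Metric.tendsto_nhdsWithin_nhds]
  intro ε hε
  -- Upper bound
  have hUB : ∃ δ₁ > 0, ∀ φ, φ₀ < φ → φ < φ₀ + δ₁ → sInf (S φ) < τ0 + ε := by
    obtain ⟨t, htS, htlt⟩ : ∃ t ∈ S0, t < τ0 + ε :=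
      exists_lt_of_csInf_lt hfin0 (by linarith)
    rcases htS.2 with hlow | hup
    · have hLpos : 0 < Lc c μ N t := Lc_pos μ hc0 N t
      have h1 : φ₀ < α / Lc c μ N t := by
        rw [lt_div_iff₀ hLpos]
        calc φ₀ * Lc c μ N t < φ₀ * (α / φ₀) := by
              apply mul_lt_mul_of_pos_left hlow hφ₀pos
          _ = α := by field_simp
      refine ⟨α / Lc c μ N t - φ₀, by linarith, ?_⟩
      intro φ hφ1 hφ2
      have hφpos : 0 < φ := lt_trans hφ₀pos hφ1
      have h2 : φ < α / Lc c μ N t := by linarith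
      have h3 : Lc c μ N t ≤ α / φ := by
        rw [le_div_iff₀ hφpos]
        have h4 : Lc c μ N t * φ < Lc c μ N t * (α / Lc c μ N t) :=
          mul_lt_mul_of_pos_left h2 hLpos
        have h5 : Lc c μ N t * (α / Lc c μ N t) = α := by field_simp
        linarith
      have htφ : t ∈ S φ := ⟨htS.1, Or.inl h3⟩
      exact lt_of_le_of_lt (csInf_le (hbddS φ) htφ) htlt
    · refine ⟨1, one_pos, ?_⟩
      intro φ hφ1 _
      have h1 : β / φ < β / φ₀ := by
        apply div_lt_div_of_pos_left hβpos hφ₀pos hφ1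
      have htφ : t ∈ S φ := ⟨htS.1, Or.inr (le_trans h1.le hup)⟩
      exact lt_of_le_of_lt (csInf_le (hbddS φ) htφ) htlt
  -- Lower bound
  have hLB : ∃ δ₂ > 0, ∀ φ, φ₀ < φ → φ < φ₀ + δ₂ → τ0 - ε < sInf (S φ) := by
    by_cases hcase : τ0 - ε / 2 < 0
    · refine ⟨1, one_pos, ?_⟩
      intro φ hφ1 _
      have h0 : 0 ≤ sInf (S φ) := le_csInf (hfin φ hφ1) (fun t ht => ht.1)
      linarith
    · push_neg at hcase
      set T : ℝ := τ0 - ε / 2 with hT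
      clear_value T
      have hB : ∀ s ∈ Set.Icc 0 T, Lc c μ N s < β / φ₀ := by
        intro s hs
        by_contra h
        push_neg at h
        have hsS0 : s ∈ S0 := ⟨hs.1, Or.inr h⟩
        have : τ0 ≤ s := hτ0def ▸ csInf_le hbdd0 hsS0
        have : s ≤ T := hs.2
        linarith
      obtain ⟨M, hMpos, hMB, hMbd⟩ :=
        sup_bound c μ hc hμ N hmono hN0 hrc T (β / φ₀) hcase hB
      have h1 : φ₀ < β / M := by
        rw [lt_div_iff₀ hMpos]
        calc φ₀ * M < φ₀ * (β / φ₀) := mul_lt_mul_of_pos_left hMB hφ₀pos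
          _ = β := by field_simp
      refine ⟨β / M - φ₀, by linarith, ?_⟩
      intro φ hφ1 hφ2
      have hφpos : 0 < φ := lt_trans hφ₀pos hφ1
      have h2 : φ < β / M := by linarith
      have h3 : M < β / φ := by
        rw [lt_div_iff₀ hφpos]
        calc M * φ < M * (β / M) := mul_lt_mul_of_pos_left h2 hMpos
          _ = β := by field_simp
      have hTle : T ≤ sInf (S φ) := by
        apply le_csInf (hfin φ hφ1)
        intro s hsS
        rcases hsS.2 with hlow | hup
        · have hαφ : α / φ < α / φ₀ := div_lt_div_of_pos_left hα hφ₀pos hφ1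
          have hsS0 : s ∈ S0 := ⟨hsS.1, Or.inl (lt_of_le_of_lt hlow hαφ)⟩
          have : τ0 ≤ s := hτ0def ▸ csInf_le hbdd0 hsS0
          linarith
        · by_contra h
          push_neg at h
          have hsIcc : s ∈ Set.Icc 0 T := ⟨hsS.1, h.le⟩
          have := hMbd s hsIcc
          linarith
      linarith
  obtain ⟨δ₁, hδ₁, hU⟩ := hUB
  obtain ⟨δ₂, hδ₂, hL⟩ := hLB
  refine ⟨min δ₁ δ₂, lt_min hδ₁ hδ₂, ?_⟩
  intro φ hφ hdist
  have hφ1 : φ₀ < φ := hφ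
  rw [Real.dist_eq] at hdist
  have habs : φ - φ₀ < min δ₁ δ₂ := lt_of_abs_lt hdist
  have hu := hU φ hφ1 (by have := min_le_left δ₁ δ₂; linarith)
  have hl := hL φ hφ1 (by have := min_le_right δ₁ δ₂; linarith)
  rw [Real.dist_eq, abs_lt]
  constructor <;> simp only [hS, hS0] at hu hl ⊢ <;> linarith
end

section
/- Let X be a real random variable with P(ψX = b/a) = 0 for a fixed ψ > 0 with a, b > 0, and suppose X ≥ 0 and E[X] < ∞. Then the map δ ↦ E[min(b, a(ψ+δ)X)] is differentiable at δ = 0 from the right with right derivative a·E[X·1{ψX < b/a}]. -/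
open MeasureTheory

/-- Right derivative of `ψ ↦ E[min(b, aψX)]`: for `X ≥ 0` integrable with
`P(X = b/(aψ)) = 0`, the map `δ ↦ E[min(b, a(ψ+δ)X)]` has right derivative
`a·E[X·1{X < b/(aψ)}]` at `δ = 0`. -/
theorem stmt15 {Ω : Type*} [MeasurableSpace Ω] (μ : Measure Ω) [IsProbabilityMeasure μ]
    (X : Ω → ℝ) (hX : Integrable X μ) (hpos : ∀ ω, 0 ≤ X ω)
    (a b ψ : ℝ) (ha : 0 < a) (hb : 0 < b) (hψ : 0 < ψ)
    (hatom : μ {ω | X ω = b / (a * ψ)} = 0) :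
    Filter.Tendsto
      (fun δ : ℝ =>
        ((∫ ω, min b (a * (ψ + δ) * X ω) ∂μ) - ∫ ω, min b (a * ψ * X ω) ∂μ) / δ)
      (nhdsWithin 0 (Set.Ioi 0))
      (nhds (a * ∫ ω in {ω | X ω < b / (a * ψ)}, X ω ∂μ)) := by
  set c : ℝ := b / (a * ψ) with hcdef
  have hc : 0 < c := div_pos hb (mul_pos ha hψ)
  set s : Set Ω := {ω | X ω < c} with hsdef
  have hsnm : NullMeasurableSet s μ :=
    nullMeasurableSet_lt hX.aemeasurable aemeasurable_const
  set t : Set Ω := MeasureTheory.toMeasurable μ s with htdef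
  have htm : MeasurableSet t := measurableSet_toMeasurable μ s
  have hts : t =ᵐ[μ] s := hsnm.toMeasurable_ae_eq
  have hint : ∀ u : ℝ, Integrable (fun ω => min b (a * u * X ω)) μ := fun u =>
    (integrable_const b).inf (hX.const_mul (a * u))
  set F : ℝ → Ω → ℝ :=
    fun δ ω => (min b (a * (ψ + δ) * X ω) - min b (a * ψ * X ω)) / δ with hFdef
  have hEq : ∀ δ : ℝ,
      ((∫ ω, min b (a * (ψ + δ) * X ω) ∂μ) - ∫ ω, min b (a * ψ * X ω) ∂μ) / δ
        = ∫ ω, F δ ω ∂μ := by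
    intro δ
    simp only [hFdef]
    rw [integral_div, integral_sub (hint (ψ + δ)) (hint ψ)]
  set g : Ω → ℝ := t.indicator (fun ω => a * X ω) with hgdef
  have hmeas : ∀ δ : ℝ, AEStronglyMeasurable (F δ) μ := by
    intro δ
    exact ((((aemeasurable_const.min ((hX.aemeasurable).const_mul _)).sub
      (aemeasurable_const.min ((hX.aemeasurable).const_mul _))).div_const δ)).aestronglyMeasurable
  have hbound : ∀ᶠ δ in nhdsWithin (0:ℝ) (Set.Ioi 0),
      ∀ᵐ ω ∂μ, ‖F δ ω‖ ≤ a * X ω := by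
    filter_upwards [self_mem_nhdsWithin] with δ (hδ : 0 < δ)
    refine Filter.Eventually.of_forall fun ω => ?_
    have hx := hpos ω
    have h1 : min b (a * ψ * X ω) ≤ min b (a * (ψ + δ) * X ω) := by
      apply min_le_min le_rfl
      nlinarith [mul_nonneg (mul_nonneg ha.le hδ.le) hx]
    have h2 : min b (a * (ψ + δ) * X ω) - min b (a * ψ * X ω) ≤ a * δ * X ω := by
      rcases le_or_gt b (a * ψ * X ω) with h | h
      · have h3 : min b (a * (ψ + δ) * X ω) ≤ b := min_le_left _ _
        rw [min_eq_left h]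
        nlinarith [mul_nonneg (mul_nonneg ha.le hδ.le) hx]
      · rw [min_eq_right h.le]
        have h3 : min b (a * (ψ + δ) * X ω) ≤ a * (ψ + δ) * X ω := min_le_right _ _
        nlinarith
    rw [Real.norm_eq_abs]
    simp only [hFdef]
    rw [abs_div, abs_of_pos hδ, div_le_iff₀ hδ, abs_of_nonneg (by linarith)]
    nlinarith
  have hboundint : Integrable (fun ω => a * X ω) μ := hX.const_mul a
  have hlim : ∀ᵐ ω ∂μ, Filter.Tendsto (fun δ => F δ ω) (nhdsWithin 0 (Set.Ioi 0)) (nhds (g ω)) := by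
    have h1 : ∀ᵐ ω ∂μ, X ω ≠ c := by
      rw [ae_iff]; simpa using hatom
    have h2 : (s.indicator (fun ω => a * X ω) : Ω → ℝ) =ᵐ[μ] g :=
      indicator_ae_eq_of_ae_eq_set hts.symm
    filter_upwards [h1, h2] with ω hne hg2
    rw [← hg2]
    rcases lt_or_gt_of_ne hne with hlt | hgt
    · have hmem : ω ∈ s := hlt
      rw [Set.indicator_of_mem hmem]
      have hlt' : X ω < b / (a * ψ) := hlt
      have hb' : a * ψ * X ω < b := by
        have := (lt_div_iff₀ (mul_pos ha hψ)).mp hlt'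
        nlinarith
      set ε : ℝ := (b - a * ψ * X ω) / (a * (X ω + 1)) with hεdef
      have hε : 0 < ε := div_pos (by linarith) (by nlinarith [hpos ω])
      apply Filter.Tendsto.congr' _ tendsto_const_nhds
      filter_upwards [Ioo_mem_nhdsGT_of_mem (Set.mem_Ico.mpr ⟨le_refl 0, hε⟩)] with δ hδ
      obtain ⟨hδ0, hδε⟩ := hδ
      have hx := hpos ω
      have hlt2 : a * (ψ + δ) * X ω < b := by
        have hkey : δ * (a * (X ω + 1)) < b - a * ψ * X ω := by
          calc δ * (a * (X ω + 1)) < ε * (a * (X ω + 1)) := by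
                apply mul_lt_mul_of_pos_right hδε; nlinarith
            _ = b - a * ψ * X ω := by
                rw [hεdef]; field_simp
        nlinarith
      simp only [hFdef]
      rw [min_eq_right hlt2.le, min_eq_right hb'.le, eq_div_iff hδ0.ne']
      ring
    · have hmem : ω ∉ s := not_lt.mpr hgt.le
      rw [Set.indicator_of_notMem hmem]
      have hxpos : 0 < X ω := lt_trans hc hgt
      have hgt' : b / (a * ψ) < X ω := hgt
      have hb' : b < a * ψ * X ω := by
        have := (div_lt_iff₀ (mul_pos ha hψ)).mp hgt'
        nlinarith
      apply Filter.Tendsto.congr' _ tendsto_const_nhds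
      filter_upwards [self_mem_nhdsWithin] with δ (hδ : 0 < δ)
      have hb2 : b ≤ a * (ψ + δ) * X ω := by nlinarith
      simp only [hFdef]
      rw [min_eq_left hb'.le, min_eq_left hb2]
      simp
  have hmain : Filter.Tendsto (fun δ => ∫ ω, F δ ω ∂μ) (nhdsWithin (0:ℝ) (Set.Ioi 0))
      (nhds (∫ ω, g ω ∂μ)) :=
    tendsto_integral_filter_of_dominated_convergence _ (Filter.Eventually.of_forall hmeas)
      hbound hboundint hlim
  have hval : ∫ ω, g ω ∂μ = a * ∫ ω in s, X ω ∂μ := by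
    rw [hgdef, integral_indicator htm, integral_const_mul, Measure.restrict_congr_set hts]
  simp only [hEq]
  rw [← hval]
  exact hmain
end

section
/- Let X ≥ 0 be an integrable random variable with a, b, ψ > 0. Then the left derivative at ψ of the map s ↦ E[min(b, asX)] equals a·E[X·1{X ≤ b/(aψ)}], i.e. lim_{δ→0⁺} (E[min(b, aψX)] − E[min(b, a(ψ−δ)X)])/δ = a·E[X·1{X ≤ b/(aψ)}]. -/
open MeasureTheory Filter Topology

/-!
Pointwise in `ω`, the left difference quotient of `s ↦ min b (a s X)` at `ψ` is bounded by
`|a X|` and tends to `a X` on `{a ψ X ≤ b}` (where both minima are the linear branch) and to `0`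
off it (where both minima equal `b` for small `δ`). Dominated convergence finishes the proof; no
atom condition is needed because the boundary `{a ψ X = b}` lies on the linear side.
-/

lemma abs_min_sub_min_le_abs_sub (b u v : ℝ) : |min b u - min b v| ≤ |u - v| := by
  simpa using abs_min_sub_min_le_max b u b v

lemma abs_min_mul_sub_div_le (a b ψ x δ : ℝ) (hδ : 0 < δ) :
    |(min b (a * ψ * x) - min b (a * (ψ - δ) * x)) / δ| ≤ |a * x| := by
  rw [abs_div, abs_of_pos hδ, div_le_iff₀ hδ]
  calc |min b (a * ψ * x) - min b (a * (ψ - δ) * x)|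
      ≤ |a * ψ * x - a * (ψ - δ) * x| := abs_min_sub_min_le_abs_sub _ _ _
    _ = |a * x| * δ := by
      rw [show a * ψ * x - a * (ψ - δ) * x = a * x * δ by ring, abs_mul, abs_of_pos hδ]

lemma tendsto_min_mul_sub_div (a b ψ x : ℝ) (hax : 0 ≤ a * x) :
    Tendsto (fun δ => (min b (a * ψ * x) - min b (a * (ψ - δ) * x)) / δ) (𝓝[>] 0)
      (𝓝 (if a * ψ * x ≤ b then a * x else 0)) := by
  split_ifs with hle
  · refine tendsto_const_nhds.congr' ?_
    filter_upwards [self_mem_nhdsWithin] with δ (hδ : 0 < δ)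
    have hle' : a * (ψ - δ) * x ≤ b := by nlinarith
    rw [min_eq_right hle, min_eq_right hle']
    field_simp
    ring
  · have hlt : ∀ᶠ δ in 𝓝 (0 : ℝ), b < a * (ψ - δ) * x :=
      (continuous_const.mul (continuous_const.sub continuous_id)).mul continuous_const
        |>.tendsto' 0 _ (by simp) |>.eventually (lt_mem_nhds (not_le.1 hle))
    refine tendsto_const_nhds.congr' ?_
    filter_upwards [nhdsWithin_le_nhds hlt] with δ hδ
    rw [min_eq_left (not_le.1 hle).le, min_eq_left hδ.le, sub_self, zero_div]

theorem tendsto_integral_min_mul_sub_div {Ω : Type*} [MeasurableSpace Ω] {μ : Measure Ω}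
    [IsFiniteMeasure μ] {X : Ω → ℝ} (hX : Integrable X μ) (a b ψ : ℝ)
    (hpos : ∀ ω, 0 ≤ a * X ω) :
    Tendsto
      (fun δ => ((∫ ω, min b (a * ψ * X ω) ∂μ) - ∫ ω, min b (a * (ψ - δ) * X ω) ∂μ) / δ)
      (𝓝[>] 0) (𝓝 (∫ ω, if a * ψ * X ω ≤ b then a * X ω else 0 ∂μ)) := by
  have hmin : ∀ c, Integrable (fun ω => min b (c * X ω)) μ := fun c =>
    (integrable_const b).inf (hX.const_mul c)
  have hdom := tendsto_integral_filter_of_dominated_convergence (μ := μ)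
    (l := 𝓝[>] (0 : ℝ)) (fun ω => |a * X ω|)
    (F := fun δ ω => (min b (a * ψ * X ω) - min b (a * (ψ - δ) * X ω)) / δ)
    (Eventually.of_forall fun δ => (((hmin _).sub (hmin _)).div_const δ).1)
    (eventually_mem_nhdsWithin.mono fun δ hδ =>
      ae_of_all _ fun ω => abs_min_mul_sub_div_le a b ψ (X ω) δ hδ)
    (hX.const_mul a).abs (ae_of_all _ fun ω => tendsto_min_mul_sub_div a b ψ (X ω) (hpos ω))
  refine hdom.congr fun δ => ?_
  rw [integral_div, integral_sub (hmin _) (hmin _)]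

theorem stmt16_general {Ω : Type*} [MeasurableSpace Ω] (μ : Measure Ω) [IsProbabilityMeasure μ]
    (X : Ω → ℝ) (hX : Integrable X μ) (hpos : ∀ ω, 0 ≤ X ω)
    (a b ψ : ℝ) (ha : 0 < a) (hψ : 0 < ψ) :
    Filter.Tendsto
      (fun δ : ℝ =>
        ((∫ ω, min b (a * ψ * X ω) ∂μ) - ∫ ω, min b (a * (ψ - δ) * X ω) ∂μ) / δ)
      (nhdsWithin 0 (Set.Ioi 0))
      (nhds (a * ∫ ω in {ω | X ω ≤ b / (a * ψ)}, X ω ∂μ)) := by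
  have haψ : 0 < a * ψ := mul_pos ha hψ
  have hS : NullMeasurableSet {ω | a * ψ * X ω ≤ b} μ :=
    nullMeasurableSet_le (hX.1.aemeasurable.const_mul _) aemeasurable_const
  have hset : {ω | X ω ≤ b / (a * ψ)} = {ω | a * ψ * X ω ≤ b} := by
    ext ω
    exact le_div_iff₀' haψ
  convert tendsto_integral_min_mul_sub_div hX a b ψ fun ω => mul_nonneg ha.le (hpos ω) using 2
  rw [hset, ← integral_const_mul, ← integral_indicator₀ hS]
  rfl

/-- Left derivative of `ψ ↦ E[min(b, aψX)]`: for `X ≥ 0` integrable it equals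
`a·E[X·1{X ≤ b/(aψ)}]` (no atom condition needed). -/
theorem stmt16 {Ω : Type*} [MeasurableSpace Ω] (μ : Measure Ω) [IsProbabilityMeasure μ]
    (X : Ω → ℝ) (hX : Integrable X μ) (hpos : ∀ ω, 0 ≤ X ω)
    (a b ψ : ℝ) (ha : 0 < a) (hb : 0 < b) (hψ : 0 < ψ) :
    Filter.Tendsto
      (fun δ : ℝ =>
        ((∫ ω, min b (a * ψ * X ω) ∂μ) - ∫ ω, min b (a * (ψ - δ) * X ω) ∂μ) / δ)
      (nhdsWithin 0 (Set.Ioi 0))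
      (nhds (a * ∫ ω in {ω | X ω ≤ b / (a * ψ)}, X ω ∂μ)) :=
  stmt16_general μ X hX hpos a b ψ ha hψ
end
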